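/- arXiv:0901.1329 — 3 statements merged into one kernel-verified Lean document; each statement's English description precedes it below -/
import Mathlib

section
/- Let X be a locally compact, locally connected metric space and let U be a region (nonempty open connected subset) of X. Suppose F₁, F₂, F₃, … are subsets of U, each closed in U, and the union ⋃_{i=1}^∞ F_i cuts U. Then there exist an index i and a region V ⊆ U such that F_i cuts V. -/
open Set

/-- A region of a topological space is a nonempty open connected subset. -/
def IsRegion {X : Type*} [TopologicalSpace X] (U : Set X) : Prop :=
  IsOpen U ∧ IsConnected U

/-- A subset `A` cuts `Y` if there are two points of `Y \ A` that are not both contained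
in any compact connected subset of `Y \ A`. -/
def Cuts {X : Type*} [TopologicalSpace X] (A Y : Set X) : Prop :=
  ∃ x ∈ Y \ A, ∃ y ∈ Y \ A, ∀ K : Set X, K ⊆ Y \ A → IsCompact K → IsConnected K →
    ¬(x ∈ K ∧ y ∈ K)

/-- In a locally compact, locally connected T2 space, every point of an open set has a
connected open neighborhood whose closure is compact and contained in the open set. -/
lemma exists_connected_open_compact_closure {X : Type*} [TopologicalSpace X] [T2Space X]
    [LocallyCompactSpace X] [LocallyConnectedSpace X] {O : Set X} (hO : IsOpen O) {p : X}
    (hp : p ∈ O) :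
    ∃ W : Set X, IsOpen W ∧ IsPreconnected W ∧ p ∈ W ∧ closure W ⊆ O ∧
      IsCompact (closure W) := by
  obtain ⟨N, hNc, hpN, hNO⟩ := exists_compact_subset hO hp
  have hclN : closure (connectedComponentIn (interior N) p) ⊆ N := by
    calc closure (connectedComponentIn (interior N) p)
        ⊆ closure N := closure_mono ((connectedComponentIn_subset _ _).trans interior_subset)
      _ = N := hNc.isClosed.closure_eq
  exact ⟨connectedComponentIn (interior N) p, isOpen_interior.connectedComponentIn,
    isPreconnected_connectedComponentIn, mem_connectedComponentIn hpN, hclN.trans hNO,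
    hNc.of_isClosed_subset isClosed_closure hclN⟩

/-- A nonempty compact connected set inside an open set can be surrounded by a connected
open set with compact closure contained in the open set. -/
lemma exists_connected_open_compact_closure_of_isCompact {X : Type*} [TopologicalSpace X]
    [T2Space X] [LocallyCompactSpace X] [LocallyConnectedSpace X] {O K : Set X}
    (hO : IsOpen O) (hK : IsCompact K) (hKconn : IsPreconnected K) (hKne : K.Nonempty)
    (hKO : K ⊆ O) :
    ∃ V : Set X, IsOpen V ∧ IsPreconnected V ∧ K ⊆ V ∧ closure V ⊆ O ∧
      IsCompact (closure V) := by
  choose W hWopen hWconn hWmem hWcl hWcomp using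
    fun p : K => exists_connected_open_compact_closure hO (hKO p.2)
  obtain ⟨t, hcov⟩ := hK.elim_nhds_subcover' (fun p hp => W ⟨p, hp⟩)
    (fun p hp => (hWopen ⟨p, hp⟩).mem_nhds (hWmem ⟨p, hp⟩))
  obtain ⟨x₀, hx₀⟩ := hKne
  set V : Set X := ⋃ p ∈ t, W p with hV
  have hKV : K ⊆ V := hcov
  refine ⟨V, isOpen_biUnion fun p _ => hWopen p, ?_, hKV, ?_, ?_⟩
  · -- preconnected
    have h1 : V = ⋃₀ ((fun p : K => W p ∪ K) '' ↑t) := by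
      rw [sUnion_image]
      apply Subset.antisymm
      · exact iUnion₂_mono fun p _ => subset_union_left
      · rintro z hz
        simp only [mem_iUnion, mem_union] at hz
        obtain ⟨p, hpt, hz | hz⟩ := hz
        · exact mem_biUnion hpt hz
        · exact hKV hz
    rw [h1]
    refine isPreconnected_sUnion x₀ _ ?_ ?_
    · rintro s ⟨p, hpt, rfl⟩; exact Or.inr hx₀
    · rintro s ⟨p, hpt, rfl⟩
      exact (hWconn p).union p.1 (hWmem p) p.2 hKconn
  · -- closure inside O
    have : closure V ⊆ ⋃ p ∈ t, closure (W p) := by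
      apply closure_minimal (iUnion₂_mono fun p _ => subset_closure)
      exact t.finite_toSet.isClosed_biUnion fun p _ => isClosed_closure
    exact this.trans (iUnion₂_subset fun p _ => hWcl p)
  · -- closure compact
    refine IsCompact.of_isClosed_subset (t.finite_toSet.isCompact_biUnion fun p _ => hWcomp p)
      isClosed_closure ?_
    apply closure_minimal (iUnion₂_mono fun p _ => subset_closure)
    exact t.finite_toSet.isClosed_biUnion fun p _ => isClosed_closure

/-- The intersection of a nested sequence of nonempty compact preconnected sets in a T2
space is preconnected. -/
lemma isPreconnected_iInter_of_nested {X : Type*} [TopologicalSpace X] [T2Space X]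
    {K : ℕ → Set X} (hnest : ∀ n, K (n + 1) ⊆ K n) (hcomp : ∀ n, IsCompact (K n))
    (hconn : ∀ n, IsPreconnected (K n)) :
    IsPreconnected (⋂ n, K n) := by
  have hmono : ∀ {m n : ℕ}, m ≤ n → K n ⊆ K m := by
    intro m n h
    induction h with
    | refl => exact Subset.rfl
    | step _ ih => exact (hnest _).trans ih
  have hIcl : IsClosed (⋂ n, K n) := isClosed_iInter fun n => (hcomp n).isClosed
  rw [isPreconnected_iff_subset_of_fully_disjoint_closed hIcl]
  intro A B hA hB hsub hdisj
  set I := ⋂ n, K n with hI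
  rcases (I ∩ A).eq_empty_or_nonempty with hAe | hAne
  · right
    intro z hz
    rcases hsub hz with h | h
    · have : z ∈ I ∩ A := ⟨hz, h⟩
      rw [hAe] at this
      exact this.elim
    · exact h
  rcases (I ∩ B).eq_empty_or_nonempty with hBe | hBne
  · left
    intro z hz
    rcases hsub hz with h | h
    · exact h
    · have : z ∈ I ∩ B := ⟨hz, h⟩
      rw [hBe] at this
      exact this.elim
  -- both pieces nonempty: derive a contradiction
  exfalso
  have hIA : IsCompact (I ∩ A) := ((hcomp 0).of_isClosed_subset hIcl
    (iInter_subset _ 0)).inter_right hA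
  have hIB : IsCompact (I ∩ B) := ((hcomp 0).of_isClosed_subset hIcl
    (iInter_subset _ 0)).inter_right hB
  have hdisj' : Disjoint (I ∩ A) (I ∩ B) :=
    (hdisj.mono inter_subset_right inter_subset_right)
  obtain ⟨u, v, hu, hv, hAu, hBv, huv⟩ := SeparatedNhds.of_isCompact_isCompact hIA hIB hdisj'
  have hIuv : I ⊆ u ∪ v := fun z hz => by
    rcases hsub hz with h | h
    · exact Or.inl (hAu ⟨hz, h⟩)
    · exact Or.inr (hBv ⟨hz, h⟩)
  -- some K n is contained in u ∪ v
  have hexists : ∃ n, K n ⊆ u ∪ v := by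
    by_contra hcon
    push_neg at hcon
    have hne' : ∀ n, (K n \ (u ∪ v)).Nonempty := fun n => by
      obtain ⟨z, hz, hz'⟩ := not_subset.mp (hcon n); exact ⟨z, hz, hz'⟩
    have hdir : Directed (· ⊇ ·) fun n => K n \ (u ∪ v) := by
      intro m n
      exact ⟨max m n, diff_subset_diff_left (hmono (le_max_left m n)),
        diff_subset_diff_left (hmono (le_max_right m n))⟩
    have := IsCompact.nonempty_iInter_of_directed_nonempty_isCompact_isClosed
      (fun n => K n \ (u ∪ v)) hdir hne'
      (fun n => (hcomp n).diff (hu.union hv))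
      (fun n => (hcomp n).isClosed.sdiff (hu.union hv))
    obtain ⟨z, hz⟩ := this
    simp only [mem_iInter, mem_diff] at hz
    exact (hz 0).2 (hIuv (mem_iInter.mpr fun n => (hz n).1))
  obtain ⟨n, hn⟩ := hexists
  obtain ⟨a, ha⟩ := hAne
  obtain ⟨b, hb⟩ := hBne
  have : (K n ∩ (u ∩ v)).Nonempty := by
    refine hconn n u v hu hv hn ⟨a, ?_, hAu ha⟩ ⟨b, ?_, hBv hb⟩
    · exact mem_iInter.mp ha.1 n
    · exact mem_iInter.mp hb.1 n
  obtain ⟨z, _, hz⟩ := this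
  exact huv.le_bot hz |>.elim

theorem union_of_closed_cuts_implies_one_cuts_subregion
    {X : Type*} [MetricSpace X] [LocallyCompactSpace X] [LocallyConnectedSpace X]
    (U : Set X) (hU : IsRegion U)
    (F : ℕ → Set X) (hFsub : ∀ i, F i ⊆ U)
    (hFclosed : ∀ i, ∃ C : Set X, IsClosed C ∧ F i = C ∩ U)
    (hcut : Cuts (⋃ i, F i) U) :
    ∃ (i : ℕ) (V : Set X), V ⊆ U ∧ IsRegion V ∧ Cuts (F i) V := by
  by_contra hno
  push_neg at hno
  choose C hCclosed hFC using hFclosed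
  obtain ⟨x, hx, y, hy, hcontra⟩ := hcut
  have hxU : x ∈ U := hx.1
  have hyU : y ∈ U := hy.1
  have hxF : ∀ i, x ∉ F i := fun i hi => hx.2 (mem_iUnion.mpr ⟨i, hi⟩)
  have hyF : ∀ i, y ∉ F i := fun i hi => hy.2 (mem_iUnion.mpr ⟨i, hi⟩)
  -- Good n V : invariant for the nested sequence
  set Good : ℕ → Set X → Prop := fun n V =>
    IsOpen V ∧ IsPreconnected V ∧ x ∈ V ∧ y ∈ V ∧ V ⊆ U ∧ ∀ i < n, Disjoint V (C i)
    with hGoodDef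
  -- The inductive step
  have step : ∀ n (V : Set X), Good n V →
      ∃ W : Set X, Good (n + 1) W ∧ closure W ⊆ V ∧ IsCompact (closure W) := by
    intro n V ⟨hVopen, hVconn, hxV, hyV, hVU, hVdisj⟩
    have hVne : V.Nonempty := ⟨x, hxV⟩
    have hncut : ¬ Cuts (F n) V := hno n V hVU ⟨hVopen, hVne, hVconn⟩
    rw [Cuts] at hncut
    push_neg at hncut
    obtain ⟨K, hKsub, hKcomp, hKconn, hxK, hyK⟩ :=
      hncut x ⟨hxV, hxF n⟩ y ⟨hyV, hyF n⟩
    -- K avoids C i for i ≤ n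
    have hKC : ∀ i ≤ n, Disjoint K (C i) := by
      intro i hi
      rcases lt_or_eq_of_le hi with hi | rfl
      · exact (hVdisj i hi).mono_left (hKsub.trans diff_subset)
      · rw [Set.disjoint_left]
        intro z hzK hzC
        exact (hKsub hzK).2 (by rw [hFC i]; exact ⟨hzC, hVU (hKsub hzK).1⟩)
    set O : Set X := V \ ⋃ i ∈ Finset.range (n + 1), C i with hO
    have hOopen : IsOpen O :=
      hVopen.sdiff ((Finset.range (n + 1)).finite_toSet.isClosed_biUnion fun i _ => hCclosed i)
    have hKO : K ⊆ O := by
      intro z hz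
      refine ⟨(hKsub hz).1, ?_⟩
      simp only [mem_iUnion, Finset.mem_range, not_exists]
      intro i hi hzi
      exact (hKC i (Nat.lt_succ_iff.mp hi)).le_bot ⟨hz, hzi⟩
    obtain ⟨W, hWopen, hWconn, hKW, hWcl, hWcomp⟩ :=
      exists_connected_open_compact_closure_of_isCompact hOopen hKcomp
        hKconn.isPreconnected ⟨x, hxK⟩ hKO
    refine ⟨W, ⟨hWopen, hWconn, hKW hxK, hKW hyK, ?_, ?_⟩,
      hWcl.trans diff_subset, hWcomp⟩
    · exact (subset_closure.trans hWcl).trans (diff_subset.trans hVU)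
    · intro i hi
      rw [Set.disjoint_left]
      intro z hzW hzC
      refine (subset_closure.trans hWcl hzW).2 ?_
      simp only [mem_iUnion, Finset.mem_range]
      exact ⟨i, hi, hzC⟩
  -- build the sequence
  choose! stepF hstepGood hstepCl hstepComp using step
  set seq : ℕ → Set X := fun n => Nat.rec U (fun n V => stepF n V) n with hseqDef
  have hseqSucc : ∀ n, seq (n + 1) = stepF n (seq n) := fun n => rfl
  have hseq0 : seq 0 = U := rfl
  have hGoodSeq : ∀ n, Good n (seq n) := by
    intro n
    induction n with
    | zero =>
      exact ⟨hU.1, hU.2.isPreconnected, hxU, hyU, Subset.rfl, fun i hi => absurd hi (by omega)⟩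
    | succ n ih =>
      rw [hseqSucc]
      exact hstepGood n (seq n) ih
  have hCl : ∀ n, closure (seq (n + 1)) ⊆ seq n := fun n => by
    rw [hseqSucc]; exact hstepCl n (seq n) (hGoodSeq n)
  have hComp : ∀ n, IsCompact (closure (seq (n + 1))) := fun n => by
    rw [hseqSucc]; exact hstepComp n (seq n) (hGoodSeq n)
  -- the limit continuum
  set L : ℕ → Set X := fun n => closure (seq (n + 1)) with hL
  have hLnest : ∀ n, L (n + 1) ⊆ L n := fun n =>
    (hCl (n + 1)).trans subset_closure
  have hLconn : ∀ n, IsPreconnected (L n) := fun n =>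
    ((hGoodSeq (n + 1)).2.1).closure
  have hxL : ∀ n, x ∈ L n := fun n => subset_closure (hGoodSeq (n + 1)).2.2.1
  have hyL : ∀ n, y ∈ L n := fun n => subset_closure (hGoodSeq (n + 1)).2.2.2.1
  set Kinf : Set X := ⋂ n, L n with hKinf
  have hKinfComp : IsCompact Kinf :=
    (hComp 0).of_isClosed_subset (isClosed_iInter fun n => isClosed_closure)
      (iInter_subset _ 0)
  have hKinfConn : IsPreconnected Kinf :=
    isPreconnected_iInter_of_nested hLnest (fun n => hComp n) hLconn
  have hxKinf : x ∈ Kinf := mem_iInter.mpr hxL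
  have hyKinf : y ∈ Kinf := mem_iInter.mpr hyL
  have hKinfU : Kinf ⊆ U := (iInter_subset L 0).trans ((hCl 0).trans (by rw [hseq0]))
  have hKinfF : Kinf ⊆ U \ ⋃ i, F i := by
    intro z hz
    refine ⟨hKinfU hz, ?_⟩
    rw [mem_iUnion]
    rintro ⟨i, hzi⟩
    have hzL : z ∈ L (i + 1) := mem_iInter.mp hz (i + 1)
    have hzSeq : z ∈ seq (i + 1) := hCl (i + 1) hzL
    have hdisj := (hGoodSeq (i + 1)).2.2.2.2.2 i (Nat.lt_succ_self i)
    have hzC : z ∈ C i := by rw [hFC i] at hzi; exact hzi.1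
    exact hdisj.le_bot ⟨hzSeq, hzC⟩
  exact hcontra Kinf hKinfF hKinfComp ⟨⟨x, hxKinf⟩, hKinfConn⟩ ⟨hxKinf, hyKinf⟩
end

section
/- Let U be a locally compact, second countable metric space and let 𝒞 be a family of subsets of U satisfying the countable closed sum property: if A ⊆ U can be written as A = ⋃_{n=1}^∞ A_n where each A_n is closed in A and A_n ∈ 𝒞, then A ∈ 𝒞. If U ∉ 𝒞, then for every ε > 0 there exists a compact subset K ⊆ U with diameter less than ε such that K ∉ 𝒞. -/
/-- `F` is a closed subset of the subspace `Y`. -/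
def ClosedIn {X : Type*} [TopologicalSpace X] (F Y : Set X) : Prop :=
  F ⊆ Y ∧ ∃ C : Set X, IsClosed C ∧ F = C ∩ Y

/-- In a locally compact second countable metric space `U`, if the family `𝒞` of subsets
satisfies the countable closed sum property and `U ∉ 𝒞`, then `U` contains compact sets
of arbitrarily small diameter not belonging to `𝒞`. -/
theorem exists_small_compact_not_in_class
    {U : Type*} [MetricSpace U] [LocallyCompactSpace U] [SecondCountableTopology U]
    (𝒞 : Set (Set U))
    (hsum : ∀ (A : Set U) (An : ℕ → Set U),
      (∀ n, ClosedIn (An n) A) → (∀ n, An n ∈ 𝒞) → A = ⋃ n, An n → A ∈ 𝒞)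
    (hU : (Set.univ : Set U) ∉ 𝒞) :
    ∀ ε : ℝ, 0 < ε → ∃ K : Set U, IsCompact K ∧ Metric.diam K < ε ∧ K ∉ 𝒞 := by
  intro ε hε
  by_contra h
  push_neg at h
  apply hU
  rcases isEmpty_or_nonempty U with he | hne
  · have : (Set.univ : Set U) = ∅ := Set.univ_eq_empty_iff.mpr he
    rw [this]
    apply h ∅ isCompact_empty
    simpa [Metric.diam_empty] using hε
  · set x := TopologicalSpace.denseSeq U with hxdef
    have hx : DenseRange x := TopologicalSpace.denseRange_denseSeq U
    set e : ℕ ≃ ℕ × ℕ := (Denumerable.eqv (ℕ × ℕ)).symm with he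
    set C : ℕ → Set U := fun n =>
      compactCovering U (e n).1 ∩ Metric.closedBall (x (e n).2) (ε / 3) with hC
    have hcomp : ∀ n, IsCompact (C n) :=
      fun n => (isCompact_compactCovering U (e n).1).inter_right Metric.isClosed_closedBall
    have hdiam : ∀ n, Metric.diam (C n) < ε := by
      intro n
      have h1 : Metric.diam (C n) ≤ Metric.diam (Metric.closedBall (x (e n).2) (ε / 3)) :=
        Metric.diam_mono Set.inter_subset_right Metric.isBounded_closedBall
      have h2 : Metric.diam (Metric.closedBall (x (e n).2) (ε / 3)) ≤ 2 * (ε / 3) :=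
        Metric.diam_closedBall (by positivity)
      linarith
    apply hsum _ C
    · intro n
      exact ⟨Set.subset_univ _, C n, (hcomp n).isClosed, (Set.inter_univ _).symm⟩
    · intro n
      exact h _ (hcomp n) (hdiam n)
    · apply Set.eq_of_subset_of_subset _ (Set.subset_univ _)
      intro u _
      obtain ⟨k, hk⟩ : ∃ k, u ∈ compactCovering U k := by
        have := Set.mem_univ u
        rw [← iUnion_compactCovering U] at this
        exact Set.mem_iUnion.mp this
      obtain ⟨i, hi⟩ : ∃ i, dist u (x i) < ε / 3 := by
        have := Metric.denseRange_iff.mp hx u (ε / 3) (by positivity)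
        obtain ⟨i, hi⟩ := this
        exact ⟨i, hi⟩
      refine Set.mem_iUnion.mpr ⟨e.symm (k, i), ?_⟩
      simp only [hC, Equiv.apply_symm_apply]
      exact ⟨hk, Metric.mem_closedBall.mpr hi.le⟩
end

section
/- Let X be a homogeneous locally compact metric space and let U be a second countable open subset of X such that U = ⋃_{i=1}^∞ F_i where each F_i is a compact subset of U. Then there exist an index i₀ and a countable family of homeomorphisms h_n : X → X (n = 1, 2, …) such that U ⊆ ⋃_{n=1}^∞ h_n(F_{i₀}); in particular, U is contained in a union of countably many homeomorphic copies of F_{i₀}. -/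
/-- A space is homogeneous if any point can be mapped to any other by a
self-homeomorphism. -/
def IsHomogeneous (X : Type*) [TopologicalSpace X] : Prop :=
  ∀ x y : X, ∃ h : X ≃ₜ X, h x = y

theorem sigma_compact_open_covered_by_copies_of_one_piece
    {X : Type*} [MetricSpace X] [LocallyCompactSpace X]
    (hhom : IsHomogeneous X)
    (U : Set X) (hUopen : IsOpen U) (hUsc : SecondCountableTopology U)
    (F : ℕ → Set X) (hFcpt : ∀ i, IsCompact (F i)) (hFsub : ∀ i, F i ⊆ U)
    (hUnion : U = ⋃ i, F i) :
    ∃ (i₀ : ℕ) (h : ℕ → X ≃ₜ X), U ⊆ ⋃ n, (h n) '' (F i₀) := by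
  rcases U.eq_empty_or_nonempty with hUe | hUne
  · exact ⟨0, fun _ => Homeomorph.refl X, by simp [hUe]⟩
  haveI := hUsc
  haveI := hUopen.locallyCompactSpace
  haveI : Nonempty U := hUne.to_subtype
  -- Baire category in U: some F i₀ has nonempty interior
  have hclosed : ∀ i, IsClosed ((Subtype.val : U → X) ⁻¹' F i) := fun i =>
    (hFcpt i).isClosed.preimage continuous_subtype_val
  have hcov : ⋃ i, (Subtype.val : U → X) ⁻¹' F i = Set.univ := by
    ext ⟨x, hx⟩
    simp only [Set.mem_iUnion, Set.mem_preimage, Set.mem_univ, iff_true]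
    have : x ∈ ⋃ i, F i := hUnion ▸ hx
    exact Set.mem_iUnion.1 this
  obtain ⟨i₀, hi₀⟩ := nonempty_interior_of_iUnion_of_closed hclosed hcov
  -- transfer to an interior point in X
  have hmap : IsOpenMap (Subtype.val : U → X) := hUopen.isOpenMap_subtype_val
  have hint : interior ((Subtype.val : U → X) ⁻¹' F i₀) =
      (Subtype.val : U → X) ⁻¹' interior (F i₀) :=
    (hmap.preimage_interior_eq_interior_preimage continuous_subtype_val (F i₀)).symm
  rw [hint] at hi₀
  obtain ⟨⟨x₀, hx₀U⟩, hx₀⟩ := hi₀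
  have hx₀W : x₀ ∈ interior (F i₀) := hx₀
  set W := interior (F i₀) with hW
  -- homeomorphisms sending x₀ to each point of U
  choose g hg using fun y : U => hhom x₀ y.val
  set s : U → Set U := fun y => (Subtype.val : U → X) ⁻¹' (g y '' W) with hs
  have hsopen : ∀ y, IsOpen (s y) :=
    fun y => ((g y).isOpenMap W isOpen_interior).preimage continuous_subtype_val
  have hmem : ∀ y : U, y ∈ s y := fun y => by
    simp only [hs, Set.mem_preimage]
    exact ⟨x₀, hx₀W, hg y⟩
  obtain ⟨T, hTc, hTcov⟩ := TopologicalSpace.isOpen_iUnion_countable s hsopen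
  have hTne : T.Nonempty := by
    rcases hUne with ⟨x, hx⟩
    have : (⟨x, hx⟩ : U) ∈ ⋃ y ∈ T, s y := by
      rw [hTcov]; exact Set.mem_iUnion.2 ⟨⟨x, hx⟩, hmem _⟩
    rcases Set.mem_iUnion₂.1 this with ⟨t, ht, _⟩
    exact ⟨t, ht⟩
  obtain ⟨f, hf⟩ := hTc.exists_eq_range hTne
  refine ⟨i₀, fun n => g (f n), fun y hy => ?_⟩
  have : (⟨y, hy⟩ : U) ∈ ⋃ t ∈ T, s t := by
    rw [hTcov]; exact Set.mem_iUnion.2 ⟨⟨y, hy⟩, hmem _⟩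
  rcases Set.mem_iUnion₂.1 this with ⟨t, htT, hyt⟩
  rw [hf] at htT
  rcases htT with ⟨n, rfl⟩
  rcases hyt with ⟨w, hwW, hwy⟩
  exact Set.mem_iUnion.2 ⟨n, w, interior_subset hwW, hwy⟩
end
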